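/- arXiv:2310.20313 — 2 statements merged into one kernel-verified Lean document; each statement's English description precedes it below -/
import Mathlib

section
/- Let A, B, C, D be four points on a circle of radius R, ordered counterclockwise (i.e., forming a cyclic quadrilateral). Then for any α > 0, 1/|AC|^α + 1/|BD|^α < 1/|AD|^α + 1/|BC|^α, where |XY| denotes Euclidean distance. -/
open Real Set

/-!
The chord between the angles `θ < θ'` (with `θ' < θ + 2π`) has length `2R sin ((θ' - θ) / 2)`.
The half-arcs `p, q` of the diagonals `AC, BD` and `r, s` of the sides `AD, BC` satisfy
`s < p < r` and `p + q = r + s`, so the claim is the majorization inequality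
`g p + g q < g r + g s` for `g t = (2R sin t) ^ (-α)`. This `g` is strictly convex on `(0, π)`,
since `2R sin` is strictly concave and positive there and `t ↦ t ^ (-α)` is antitone.
-/

section Convexity

variable {E : Type*} [AddCommMonoid E] [Module ℝ E] {s : Set E} {f : E → ℝ}

theorem StrictConcaveOn.const_mul {c : ℝ} (hc : 0 < c) (hf : StrictConcaveOn ℝ s f) :
    StrictConcaveOn ℝ s fun x => c * f x :=
  ⟨hf.1, fun _ hx _ hy hxy _ _ ha hb hab => by
    simpa only [smul_eq_mul, mul_add, mul_left_comm c] using
      mul_lt_mul_of_pos_left (hf.2 hx hy hxy ha hb hab) hc⟩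

theorem StrictConcaveOn.strictConvexOn_rpow_neg {α : ℝ} (hf : StrictConcaveOn ℝ s f)
    (hf_pos : ∀ x ∈ s, 0 < f x) (hα : 0 < α) : StrictConvexOn ℝ s fun x => f x ^ (-α) := by
  refine ⟨hf.1, fun x hx y hy hxy a b ha hb hab => ?_⟩
  -- weighted AM-GM on both sides of the antitone map `t ↦ t ^ (-α)`
  have hfx := hf_pos x hx
  have hfy := hf_pos y hy
  have hgeom : f x ^ a * f y ^ b < f (a • x + b • y) :=
    (geom_mean_le_arith_mean2_weighted ha.le hb.le hfx.le hfy.le hab).trans_lt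
      (hf.2 hx hy hxy ha hb hab)
  calc f (a • x + b • y) ^ (-α)
      < (f x ^ a * f y ^ b) ^ (-α) := rpow_lt_rpow_of_neg (by positivity) hgeom (by linarith)
    _ = (f x ^ (-α)) ^ a * (f y ^ (-α)) ^ b := by
      rw [mul_rpow (by positivity) (by positivity), ← rpow_mul hfx.le, ← rpow_mul hfy.le,
        ← rpow_mul hfx.le, ← rpow_mul hfy.le, mul_comm a, mul_comm b]
    _ ≤ a • f x ^ (-α) + b • f y ^ (-α) :=
      geom_mean_le_arith_mean2_weighted ha.le hb.le (by positivity) (by positivity) hab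

end Convexity

theorem StrictConvexOn.add_lt_add_of_add_eq {𝕜 : Type*} [Field 𝕜] [LinearOrder 𝕜]
    [IsStrictOrderedRing 𝕜] {s : Set 𝕜} {f : 𝕜 → 𝕜} (hf : StrictConvexOn 𝕜 s f)
    {a b x y : 𝕜} (ha : a ∈ s) (hb : b ∈ s) (hax : a < x) (hxb : x < b) (hsum : x + y = a + b) :
    f x + f y < f a + f b := by
  have hab : 0 < b - a := by linarith
  set t := (b - x) / (b - a)
  have ht₀ : 0 < t := div_pos (by linarith) hab
  have ht₁ : 0 < 1 - t := by
    have : t < 1 := (div_lt_one hab).2 (by linarith)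
    linarith
  have hx : t • a + (1 - t) • b = x := by
    simp only [smul_eq_mul, t]; field_simp; ring
  have hy : (1 - t) • a + t • b = y := by
    simp only [smul_eq_mul, t, eq_sub_of_add_eq' hsum]; field_simp; ring
  have h₁ := hf.2 ha hb (hax.trans hxb).ne ht₀ ht₁ (by ring)
  have h₂ := hf.2 ha hb (hax.trans hxb).ne ht₁ ht₀ (by ring)
  rw [hx] at h₁
  rw [hy] at h₂
  calc f x + f y < (t • f a + (1 - t) • f b) + ((1 - t) • f a + t • f b) := add_lt_add h₁ h₂
    _ = f a + f b := by simp only [smul_eq_mul]; ring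

namespace Complex

theorem norm_exp_mul_I_sub_exp_mul_I (x y : ℝ) :
    ‖exp (x * I) - exp (y * I)‖ = 2 * |Real.sin ((x - y) / 2)| := by
  have : exp (x * I) - exp (y * I) = exp (y * I) * (exp (I * (x - y : ℝ)) - 1) := by
    rw [mul_sub, ← exp_add]; push_cast; ring_nf
  rw [this, norm_mul, norm_exp_ofReal_mul_I, one_mul, norm_exp_I_mul_ofReal_sub_one, norm_mul,
    Real.norm_eq_abs, Real.norm_eq_abs, abs_two]

theorem dist_ofReal_mul_exp_mul_I {R x y : ℝ} (hR : 0 ≤ R) (hxy : x < y) (hyx : y < x + 2 * π) :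
    dist (R * exp (x * I)) (R * exp (y * I)) = 2 * R * Real.sin ((y - x) / 2) := by
  have hsin : 0 < Real.sin ((y - x) / 2) := sin_pos_of_pos_of_lt_pi (by linarith) (by linarith)
  rw [dist_eq, ← mul_sub, norm_mul, norm_real, Real.norm_eq_abs, abs_of_nonneg hR,
    norm_exp_mul_I_sub_exp_mul_I, ← neg_sub y x, neg_div, Real.sin_neg, abs_neg, abs_of_pos hsin]
  ring

end Complex

/-- For a cyclic quadrilateral `A, B, C, D` on a circle of radius `R`, ordered
counterclockwise, and any `α > 0`:
`1/|AC|^α + 1/|BD|^α < 1/|AD|^α + 1/|BC|^α`. -/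
theorem stmt_4 (R α θA θB θC θD : ℝ) (hR : 0 < R) (hα : 0 < α)
    (hAB : θA < θB) (hBC : θB < θC) (hCD : θC < θD) (hDA : θD < θA + 2 * Real.pi)
    (A B C D : ℂ)
    (hA : A = R * Complex.exp (θA * Complex.I))
    (hB : B = R * Complex.exp (θB * Complex.I))
    (hC : C = R * Complex.exp (θC * Complex.I))
    (hD : D = R * Complex.exp (θD * Complex.I)) :
    1 / dist A C ^ α + 1 / dist B D ^ α < 1 / dist A D ^ α + 1 / dist B C ^ α := by
  have hchord : StrictConvexOn ℝ (Ioo 0 π) fun t => (2 * R * sin t) ^ (-α) :=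
    ((strictConcaveOn_sin_Icc.subset Ioo_subset_Icc_self (convex_Ioo 0 π)).const_mul
      (by positivity)).strictConvexOn_rpow_neg
      (fun t ht => mul_pos (by positivity) (sin_pos_of_pos_of_lt_pi ht.1 ht.2)) hα
  subst hA hB hC hD
  have hpi := pi_pos
  simp only [one_div, ← rpow_neg dist_nonneg]
  rw [Complex.dist_ofReal_mul_exp_mul_I hR.le (by linarith) (by linarith),
    Complex.dist_ofReal_mul_exp_mul_I hR.le (by linarith) (by linarith),
    Complex.dist_ofReal_mul_exp_mul_I hR.le (by linarith) (by linarith),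
    Complex.dist_ofReal_mul_exp_mul_I hR.le (by linarith) (by linarith)]
  exact (hchord.add_lt_add_of_add_eq ⟨by linarith, by linarith⟩ ⟨by linarith, by linarith⟩
    (by linarith) (by linarith) (by ring)).trans_eq (add_comm _ _)
end

section
/- Let 2n points lie on a circle, ordered counterclockwise and labeled 1,…,2n, and let r_{ps} denote the distance between points p and s. For any α > 0, the sum of 1/r_{ps}^α over all pairs p < s with p ≡ s (mod 2) is strictly less than the sum of 1/r_{ps}^α over all pairs p < s with p ≢ s (mod 2). (Case n = 3: the cyclic hexagon inequality 1/r₁₃^α + 1/r₁₅^α + 1/r₂₄^α + 1/r₂₆^α + 1/r₃₅^α + 1/r₄₆^α < sum over the nine pairs of opposite parity.) -/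
/-!
Write `f d = (2R sin (d/2))^(-α)` for the power of the chord subtending an arc `d`. On `(0, 2π)`
it is convex, as a decreasing convex function of the concave chord length. Appending two
consecutive points `c < d` to `2m` points `θ₀ < … < θ_{2m-1}` changes the signed sum by
`∑ₖ (f (c - θ_{2k}) + f (d - θ_{2k+1}) - f (c - θ_{2k+1}) - f (d - θ_{2k})) - f (d - c)`.
Each bracket is `≤ 0` by convexity, because the two middle arcs have the same total as the
outer pair `c - θ_{2k+1} ≤ d - θ_{2k}`, and `f (d - c) > 0`; induction on `m` concludes.
-/

open Finset Real

theorem ConvexOn.map_add_map_le_of_add_eq {s : Set ℝ} {f : ℝ → ℝ} (hf : ConvexOn ℝ s f)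
    {x y u v : ℝ} (hx : x ∈ s) (hy : y ∈ s) (hxu : x ≤ u) (huy : u ≤ y) (huv : u + v = x + y) :
    f u + f v ≤ f x + f y := by
  obtain rfl : v = x + y - u := by linarith
  rcases hxu.eq_or_lt with rfl | hxu'
  · simp
  have hxy : 0 < y - x := by linarith
  set a := (y - u) / (y - x)
  set b := (u - x) / (y - x)
  have ha : 0 ≤ a := div_nonneg (by linarith) hxy.le
  have hb : 0 ≤ b := div_nonneg (by linarith) hxy.le
  have hab : a + b = 1 := by simp only [a, b]; field_simp; ring
  have hu : f u ≤ a * f x + b * f y := by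
    simpa [show a * x + b * y = u by simp only [a, b]; field_simp; ring] using
      hf.2 hx hy ha hb hab
  have hv : f (x + y - u) ≤ b * f x + a * f y := by
    simpa [show b * x + a * y = x + y - u by simp only [a, b]; field_simp; ring] using
      hf.2 hx hy hb ha (by rw [add_comm, hab])
  linear_combination hu + hv + (f x + f y) * hab

section
variable {E : Type*} [AddCommGroup E] [Module ℝ E] {s : Set E} {t : Set ℝ} {g : ℝ → ℝ}
  {h : E → ℝ}

theorem ConvexOn.comp_of_mapsTo (hg : ConvexOn ℝ t g) (hh : ConvexOn ℝ s h)
    (hg' : MonotoneOn g t) (hst : Set.MapsTo h s t) : ConvexOn ℝ s (g ∘ h) := by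
  refine ⟨hh.1, fun x hx y hy a b ha hb hab => ?_⟩
  calc g (h (a • x + b • y)) ≤ g (a • h x + b • h y) :=
        hg' (hst (hh.1 hx hy ha hb hab)) (hg.1 (hst hx) (hst hy) ha hb hab)
          (hh.2 hx hy ha hb hab)
    _ ≤ a • g (h x) + b • g (h y) := hg.2 (hst hx) (hst hy) ha hb hab

theorem ConvexOn.comp_concaveOn_of_mapsTo (hg : ConvexOn ℝ t g) (hh : ConcaveOn ℝ s h)
    (hg' : AntitoneOn g t) (hst : Set.MapsTo h s t) : ConvexOn ℝ s (g ∘ h) := by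
  refine ⟨hh.1, fun x hx y hy a b ha hb hab => ?_⟩
  calc g (h (a • x + b • y)) ≤ g (a • h x + b • h y) :=
        hg' (hg.1 (hst hx) (hst hy) ha hb hab) (hst (hh.1 hx hy ha hb hab))
          (hh.2 hx hy ha hb hab)
    _ ≤ a • g (h x) + b • g (h y) := hg.2 (hst hx) (hst hy) ha hb hab

end

theorem convexOn_rpow_of_nonpos {p : ℝ} (hp : p ≤ 0) :
    ConvexOn ℝ (Set.Ioi 0) fun x : ℝ ↦ x ^ p := by
  have : ConvexOn ℝ (Set.Ioi 0) (exp ∘ fun x ↦ (-p) • -log x) :=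
    convexOn_exp.comp_of_mapsTo ((strictConcaveOn_log_Ioi.concaveOn.neg).smul (by linarith))
      (exp_monotone.monotoneOn _) (Set.mapsTo_univ _ _)
  refine this.congr fun x hx => ?_
  simp [rpow_def_of_pos (Set.mem_Ioi.1 hx), mul_comm]

theorem concaveOn_chord (R : ℝ) (hR : 0 ≤ R) :
    ConcaveOn ℝ (Set.Ioo 0 (2 * π)) fun d ↦ 2 * R * sin (d / 2) := by
  have hsin : ConcaveOn ℝ (Set.Ioo 0 (2 * π)) fun d ↦ sin (d / 2) := by
    refine ⟨convex_Ioo 0 _, fun x hx y hy a b ha hb hab => ?_⟩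
    have := strictConcaveOn_sin_Icc.concaveOn.2 (x := x / 2) (y := y / 2)
      ⟨by linarith [hx.1], by linarith [hx.2]⟩ ⟨by linarith [hy.1], by linarith [hy.2]⟩ ha hb hab
    simp only [smul_eq_mul] at this ⊢
    rwa [show a * (x / 2) + b * (y / 2) = (a * x + b * y) / 2 by ring] at this
  simpa [mul_comm] using hsin.smul (by positivity : 0 ≤ 2 * R)

theorem chord_pos {R d : ℝ} (hR : 0 < R) (hd : d ∈ Set.Ioo 0 (2 * π)) : 0 < 2 * R * sin (d / 2) :=
  mul_pos (by positivity) (sin_pos_of_pos_of_lt_pi (by linarith [hd.1]) (by linarith [hd.2]))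

theorem convexOn_chord_rpow_neg {α R : ℝ} (hα : 0 ≤ α) (hR : 0 < R) :
    ConvexOn ℝ (Set.Ioo 0 (2 * π)) fun d ↦ (2 * R * sin (d / 2)) ^ (-α) :=
  (convexOn_rpow_of_nonpos (neg_nonpos.2 hα)).comp_concaveOn_of_mapsTo (concaveOn_chord R hR.le)
    (fun _ hx _ _ hxy => rpow_le_rpow_of_nonpos hx hxy (neg_nonpos.2 hα)) fun _ hd => chord_pos hR hd

/-- For `f d` the `-α`-th power of the chord over an arc `d`, this is the paper's `R(G)` for the
points at angles `θ 0, …, θ (N - 1)`. -/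
def alternatingPairSum (f : ℝ → ℝ) (θ : ℕ → ℝ) (N : ℕ) : ℝ :=
  ∑ j ∈ range N, ∑ i ∈ range j, if i % 2 = j % 2 then f (θ j - θ i) else -f (θ j - θ i)

section
variable {f : ℝ → ℝ} {θ : ℕ → ℝ} {L : ℝ}

theorem sum_range_two_mul_alternating_nonpos (hf : ConvexOn ℝ (Set.Ioo 0 L) f) {m : ℕ}
    (hθ : ∀ i j, i < j → j < 2 * m + 2 → θ j - θ i ∈ Set.Ioo 0 L) :
    ∀ k ≤ m, ∑ i ∈ range (2 * k),
      (if i % 2 = 0 then f (θ (2 * m) - θ i) - f (θ (2 * m + 1) - θ i)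
        else f (θ (2 * m + 1) - θ i) - f (θ (2 * m) - θ i)) ≤ 0 := by
  intro k
  induction k with
  | zero => simp
  | succ k ih =>
    intro hk
    have hab := hθ (2 * k) (2 * k + 1) (by omega) (by omega)
    have hcd := hθ (2 * m) (2 * m + 1) (by omega) (by omega)
    have hfour := hf.map_add_map_le_of_add_eq (u := θ (2 * m) - θ (2 * k))
      (v := θ (2 * m + 1) - θ (2 * k + 1)) (hθ (2 * k + 1) (2 * m) (by omega) (by omega))
      (hθ (2 * k) (2 * m + 1) (by omega) (by omega)) (by linarith [hab.1]) (by linarith [hcd.1])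
      (by ring)
    rw [mul_add_one, sum_range_succ, sum_range_succ, if_pos (by omega), if_neg (by omega)]
    linarith [ih (by omega)]

theorem alternatingPairSum_add_two_le (hf : ConvexOn ℝ (Set.Ioo 0 L) f) {m : ℕ}
    (hθ : ∀ i j, i < j → j < 2 * m + 2 → θ j - θ i ∈ Set.Ioo 0 L) :
    alternatingPairSum f θ (2 * m + 2) ≤
      alternatingPairSum f θ (2 * m) - f (θ (2 * m + 1) - θ (2 * m)) := by
  have hnew := sum_range_two_mul_alternating_nonpos hf hθ m le_rfl
  have hpair : ∀ i, (if i % 2 = 2 * m % 2 then f (θ (2 * m) - θ i) else -f (θ (2 * m) - θ i)) +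
      (if i % 2 = (2 * m + 1) % 2 then f (θ (2 * m + 1) - θ i) else -f (θ (2 * m + 1) - θ i)) =
      if i % 2 = 0 then f (θ (2 * m) - θ i) - f (θ (2 * m + 1) - θ i)
        else f (θ (2 * m + 1) - θ i) - f (θ (2 * m) - θ i) := by
    intro i
    rcases Nat.mod_two_eq_zero_or_one i with h | h <;> simp [h] <;> ring
  simp only [alternatingPairSum, sum_range_succ _ (2 * m + 1), sum_range_succ _ (2 * m),
    if_neg (show 2 * m % 2 ≠ (2 * m + 1) % 2 by omega)]
  rw [← sum_congr rfl fun i _ => hpair i, sum_add_distrib] at hnew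
  linarith

theorem alternatingPairSum_two_mul_nonpos (hf : ConvexOn ℝ (Set.Ioo 0 L) f)
    (hf₀ : ∀ d ∈ Set.Ioo 0 L, 0 ≤ f d) {m : ℕ}
    (hθ : ∀ i j, i < j → j < 2 * m → θ j - θ i ∈ Set.Ioo 0 L) :
    alternatingPairSum f θ (2 * m) ≤ 0 := by
  induction m with
  | zero => simp [alternatingPairSum]
  | succ m ih =>
    rw [mul_add_one] at hθ ⊢
    linarith [alternatingPairSum_add_two_le hf hθ, ih fun i j hij hj => hθ i j hij (by omega),
      hf₀ _ (hθ (2 * m) (2 * m + 1) (by omega) (by omega))]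

theorem alternatingPairSum_two_mul_neg (hf : ConvexOn ℝ (Set.Ioo 0 L) f)
    (hf₀ : ∀ d ∈ Set.Ioo 0 L, 0 < f d) {m : ℕ} (hm : 0 < m)
    (hθ : ∀ i j, i < j → j < 2 * m → θ j - θ i ∈ Set.Ioo 0 L) :
    alternatingPairSum f θ (2 * m) < 0 := by
  obtain ⟨m, rfl⟩ : ∃ k, m = k + 1 := ⟨m - 1, by omega⟩
  rw [mul_add_one] at hθ ⊢
  linarith [alternatingPairSum_add_two_le hf hθ,
    alternatingPairSum_two_mul_nonpos (m := m) hf (fun d hd => (hf₀ d hd).le)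
      fun i j hij hj => hθ i j hij (by omega),
    hf₀ _ (hθ (2 * m) (2 * m + 1) (by omega) (by omega))]

end

theorem sum_filter_fin_lt_eq_sum_range {M : Type*} [AddCommMonoid M] (N : ℕ)
    (p : ℕ → ℕ → Prop) [∀ i j, Decidable (p i j)] (g : ℕ → ℕ → M) :
    ∑ q ∈ univ.filter (fun q : Fin N × Fin N => q.1 < q.2 ∧ p q.1 q.2), g q.1 q.2 =
      ∑ j ∈ range N, ∑ i ∈ range j with p i j, g i j := by
  rw [sum_filter, Fintype.sum_prod_type_right]
  simp only [Fin.lt_def]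
  rw [Fin.sum_univ_eq_sum_range (fun j => ∑ i : Fin N, if i < j ∧ p i j then g i j else 0)]
  refine sum_congr rfl fun j hj => ?_
  rw [Fin.sum_univ_eq_sum_range (fun i => if i < j ∧ p i j then g i j else 0), sum_filter]
  simp only [ite_and]
  rw [← sum_filter, range_eq_Ico, Ico_filter_lt, min_eq_right (mem_range.1 hj).le, ← range_eq_Ico]

theorem alternatingPairSum_eq_sub (f : ℝ → ℝ) (θ : ℕ → ℝ) (N : ℕ) :
    alternatingPairSum f θ N =
      (∑ j ∈ range N, ∑ i ∈ range j with i % 2 = j % 2, f (θ j - θ i)) -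
        ∑ j ∈ range N, ∑ i ∈ range j with i % 2 ≠ j % 2, f (θ j - θ i) := by
  rw [alternatingPairSum, ← sum_sub_distrib]
  refine sum_congr rfl fun j _ => ?_
  rw [sum_ite, sum_neg_distrib, sub_eq_add_neg]

/-- For `2n` points (`n ≥ 2`) on a circle of radius `Rad`, ordered counterclockwise,
and any `α > 0`: the sum of `1/r_{ps}^α` over pairs `p < s` of equal parity is
strictly less than the sum over pairs of opposite parity. -/
theorem stmt_8 (n : ℕ) (hn : 2 ≤ n) (α Rad : ℝ) (hα : 0 < α) (hRad : 0 < Rad)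
    (θ : Fin (2 * n) → ℝ) (hmono : StrictMono θ)
    (hrange : ∀ i, θ i ∈ Set.Ico 0 (2 * Real.pi)) :
    (∑ q ∈ Finset.univ.filter
        (fun q : Fin (2 * n) × Fin (2 * n) => q.1 < q.2 ∧ (q.1 : ℕ) % 2 = (q.2 : ℕ) % 2),
        (2 * Rad * Real.sin ((θ q.2 - θ q.1) / 2)) ^ (-α)) <
    ∑ q ∈ Finset.univ.filter
        (fun q : Fin (2 * n) × Fin (2 * n) => q.1 < q.2 ∧ (q.1 : ℕ) % 2 ≠ (q.2 : ℕ) % 2),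
        (2 * Rad * Real.sin ((θ q.2 - θ q.1) / 2)) ^ (-α) := by
  set θ' : ℕ → ℝ := fun i => if h : i < 2 * n then θ ⟨i, h⟩ else 0
  have hθ' (i : Fin (2 * n)) : θ i = θ' i := by simp [θ']
  have hgap : ∀ i j, i < j → j < 2 * n → θ' j - θ' i ∈ Set.Ioo 0 (2 * π) := by
    intro i j hij hj
    have hlt : θ ⟨i, by omega⟩ < θ ⟨j, hj⟩ := hmono hij
    have hi := hrange ⟨i, by omega⟩
    have hj' := hrange ⟨j, hj⟩
    simp only [θ', dif_pos hj, dif_pos (hij.trans hj)]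
    constructor <;> linarith [hi.1, hj'.2]
  have hneg := alternatingPairSum_two_mul_neg (convexOn_chord_rpow_neg hα.le hRad)
    (fun d hd => rpow_pos_of_pos (chord_pos hRad hd) _) (by omega) hgap
  rw [alternatingPairSum_eq_sub, sub_neg] at hneg
  simp only [hθ']
  rw [sum_filter_fin_lt_eq_sum_range _ (fun i j => i % 2 = j % 2)
      (fun i j => (2 * Rad * sin ((θ' j - θ' i) / 2)) ^ (-α)),
    sum_filter_fin_lt_eq_sum_range _ (fun i j => i % 2 ≠ j % 2)
      (fun i j => (2 * Rad * sin ((θ' j - θ' i) / 2)) ^ (-α))]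
  exact hneg
end
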